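/- For every γ > 0 and every pair (E₁,E₂) ∈ R_FD ∪ ([0,E₁(γ)] × [0,E₂(γ)]), the pair (E₁,E₂) is achievable by γ-almost-fixed-length tests. -/

import Mathlib

open Real Filter Finset MeasureTheory
open scoped Classical

variable {𝒳 : Type*} [Fintype 𝒳] [DecidableEq 𝒳] [Nonempty 𝒳]

/-- Kullback–Leibler divergence `D(Q‖P)` between pmfs on a finite alphabet. -/
noncomputable def kl (Q P : 𝒳 → ℝ) : ℝ :=
  ∑ x, Q x * Real.log (Q x / P x)

/-- The `λ`-tilted distribution `P^(λ)` of `P₁` and `P₂`. -/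
noncomputable def tilt (P₁ P₂ : 𝒳 → ℝ) (l : ℝ) : 𝒳 → ℝ :=
  fun x => P₁ x ^ (1 - l) * P₂ x ^ l / ∑ a, P₁ a ^ (1 - l) * P₂ a ^ l

/-- Probability of a set of length-`N` sample paths under i.i.d. sampling from `P`. -/
noncomputable def prodProb (P : 𝒳 → ℝ) {N : ℕ} (S : Set (Fin N → 𝒳)) : ℝ :=
  ∑ ω : Fin N → 𝒳, S.indicator (fun ω' => ∏ i, P (ω' i)) ω

/-- The fixed-length error-exponent region `R_FD`. -/
def RFD (P₁ P₂ : 𝒳 → ℝ) : Set (ℝ × ℝ) :=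
  {p | 0 ≤ p.1 ∧ 0 ≤ p.2 ∧
    ∃ l ∈ Set.Icc (0:ℝ) 1,
      p.1 ≤ kl (tilt P₁ P₂ l) P₁ ∧ p.2 ≤ kl (tilt P₁ P₂ l) P₂}

/-- `E₁(γ) = max{D(P^(λ)‖P₁) : λ ∈ [0,1], D(P^(λ)‖P₂) ≥ γ}` (sup of the empty set is 0). -/
noncomputable def E1exp (P₁ P₂ : 𝒳 → ℝ) (γ : ℝ) : ℝ :=
  sSup {E | ∃ l ∈ Set.Icc (0:ℝ) 1, γ ≤ kl (tilt P₁ P₂ l) P₂ ∧ E = kl (tilt P₁ P₂ l) P₁}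

/-- `E₂(γ) = max{D(P^(λ)‖P₂) : λ ∈ [0,1], D(P^(λ)‖P₁) ≥ γ}` (sup of the empty set is 0). -/
noncomputable def E2exp (P₁ P₂ : 𝒳 → ℝ) (γ : ℝ) : ℝ :=
  sSup {E | ∃ l ∈ Set.Icc (0:ℝ) 1, γ ≤ kl (tilt P₁ P₂ l) P₁ ∧ E = kl (tilt P₁ P₂ l) P₂}

/-- A sequential hypothesis test whose stopping time is bounded by `N`:
a stopping time `τ` for the coordinate filtration, together with decision events
`A1`, `A2` that are determined by the samples observed up to time `τ`,
are disjoint, and exhaust the sample space. -/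
structure HypTest (𝒳 : Type*) (N : ℕ) where
  τ : (Fin N → 𝒳) → ℕ
  A1 : Set (Fin N → 𝒳)
  A2 : Set (Fin N → 𝒳)
  tau_le : ∀ ω, τ ω ≤ N
  stopping : ∀ ω ω', (∀ i : Fin N, (i : ℕ) < τ ω → ω i = ω' i) → τ ω' = τ ω
  adapted1 : ∀ ω ω', (∀ i : Fin N, (i : ℕ) < τ ω → ω i = ω' i) → (ω ∈ A1 ↔ ω' ∈ A1)
  adapted2 : ∀ ω ω', (∀ i : Fin N, (i : ℕ) < τ ω → ω i = ω' i) → (ω ∈ A2 ↔ ω' ∈ A2)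
  disj : Disjoint A1 A2
  exhaust : A1 ∪ A2 = Set.univ

/-- `(E₁, E₂)` is achievable by `γ`-almost-fixed-length tests. -/
def AFLAchievable (P₁ P₂ : 𝒳 → ℝ) (γ E₁ E₂ : ℝ) : Prop :=
  0 ≤ E₁ ∧ 0 ≤ E₂ ∧
  ∃ c : ℝ, 0 < c ∧ ∃ l : ℕ, 0 < l ∧
    ∀ δ : ℝ, 0 < δ → ∃ n₀ : ℕ, ∀ n : ℕ, n₀ ≤ n →
      ∃ N : ℕ, (N : ℝ) ≤ c * (n : ℝ) ^ l ∧
        ∃ T : HypTest 𝒳 N,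
          prodProb P₁ {ω | n < T.τ ω} ≤ Real.exp (-(γ * n)) ∧
          prodProb P₂ {ω | n < T.τ ω} ≤ Real.exp (-(γ * n)) ∧
          prodProb P₁ T.A2 ≤ Real.exp (-((E₁ - δ) * n)) ∧
          prodProb P₂ T.A1 ≤ Real.exp (-((E₂ - δ) * n))

/-- `(E₁, E₂, E_Ω)` is achievable by fixed-length tests with a rejection option. -/
def RejAchievable (P₁ P₂ : 𝒳 → ℝ) (E₁ E₂ EΩ : ℝ) : Prop :=
  0 ≤ E₁ ∧ 0 ≤ E₂ ∧ 0 ≤ EΩ ∧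
  ∀ δ : ℝ, 0 < δ → ∃ n₀ : ℕ, ∀ n : ℕ, n₀ ≤ n →
    ∃ A1 A2 AΩ : Set (Fin n → 𝒳),
      Disjoint A1 A2 ∧ Disjoint A1 AΩ ∧ Disjoint A2 AΩ ∧ A1 ∪ A2 ∪ AΩ = Set.univ ∧
      prodProb P₁ A2 ≤ Real.exp (-((E₁ - δ) * n)) ∧
      prodProb P₂ A1 ≤ Real.exp (-((E₂ - δ) * n)) ∧
      prodProb P₁ AΩ + prodProb P₂ AΩ ≤ Real.exp (-((EΩ - δ) * n))

/-- Sum of the log-likelihood ratios of the first `n` samples. -/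
noncomputable def S1 (P₁ P₂ : 𝒳 → ℝ) (n : ℕ) {N : ℕ} (ω : Fin N → 𝒳) : ℝ :=
  ∑ i ∈ Finset.univ.filter (fun i : Fin N => (i : ℕ) < n),
    Real.log (P₁ (ω i) / P₂ (ω i))

/-- Sum of the log-likelihood ratios of the samples after time `n`. -/
noncomputable def S2 (P₁ P₂ : 𝒳 → ℝ) (n : ℕ) {N : ℕ} (ω : Fin N → 𝒳) : ℝ :=
  ∑ i ∈ Finset.univ.filter (fun i : Fin N => n ≤ (i : ℕ)),
    Real.log (P₁ (ω i) / P₂ (ω i))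

/-- Event that the two-phase test (phase-one thresholds `α₁ > β₁`, phase-two threshold `α`)
chooses `H₁`. -/
def twoPhaseA1 (P₁ P₂ : 𝒳 → ℝ) (k n : ℕ) (α₁ β₁ α : ℝ) : Set (Fin ((k + 1) * n) → 𝒳) :=
  {ω | α₁ ≤ S1 P₁ P₂ n ω / n ∨
    (β₁ < S1 P₁ P₂ n ω / n ∧ S1 P₁ P₂ n ω / n < α₁ ∧ α ≤ S2 P₁ P₂ n ω / (k * n))}

/-- Event that the two-phase test chooses `H₂`. -/
def twoPhaseA2 (P₁ P₂ : 𝒳 → ℝ) (k n : ℕ) (α₁ β₁ α : ℝ) : Set (Fin ((k + 1) * n) → 𝒳) :=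
  {ω | S1 P₁ P₂ n ω / n ≤ β₁ ∨
    (β₁ < S1 P₁ P₂ n ω / n ∧ S1 P₁ P₂ n ω / n < α₁ ∧ S2 P₁ P₂ n ω / (k * n) < α)}

/-- Stopping time of the two-phase test: `n` if phase one is decisive, `(k+1)n` otherwise. -/
noncomputable def twoPhaseTau (P₁ P₂ : 𝒳 → ℝ) (k n : ℕ) (α₁ β₁ : ℝ)
    (ω : Fin ((k + 1) * n) → 𝒳) : ℕ :=
  if β₁ < S1 P₁ P₂ n ω / n ∧ S1 P₁ P₂ n ω / n < α₁ then (k + 1) * n else n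

/-!
Write `θ(λ)` for the mean of `log (P₁ / P₂)` under `P^(λ)`. Since `P^(λ)` is the exponential
tilt of `P₂` by `(1 - λ) log (P₁ / P₂)` and of `P₁` by `-λ log (P₁ / P₂)`, Chernoff's bound shows
that the empirical mean of the log-likelihood ratio over `m` samples exceeds `θ(λ)` with
`P₂`-probability at most `e^{-m D(P^(λ)‖P₂)}` and falls below it with `P₁`-probability at most
`e^{-m D(P^(λ)‖P₁)}`. A threshold test at `θ(λ)` after `n` samples therefore achieves `R_FD`.

For the box, a two-phase test decides after `n` samples when the mean is at least `θ(λ_b)` or at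
most `θ(λ_a)`, where `D(P^(λ_a)‖P₂) ≥ γ` and `D(P^(λ_b)‖P₁) ≥ γ` make continuing `e^{-γn}`-unlikely
under both hypotheses; otherwise it runs a threshold test at `θ(1/2)` on `kn` fresh samples, and
since `D(P^(1/2)‖P_i) > 0` for `P₁ ≠ P₂`, a large `k` makes that phase's errors negligible.
Pairs with a zero exponent are achieved by a test that always takes the same decision.
-/

section TiltedFamily

variable {α : Type*} [Fintype α] {P₁ P₂ : α → ℝ} {l : ℝ}

noncomputable def logRatio (P₁ P₂ : α → ℝ) (x : α) : ℝ := log (P₁ x / P₂ x)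

noncomputable def tiltNormalizer (P₁ P₂ : α → ℝ) (l : ℝ) : ℝ := ∑ a, P₁ a ^ (1 - l) * P₂ a ^ l

noncomputable def tiltMean (P₁ P₂ : α → ℝ) (l : ℝ) : ℝ := ∑ x, tilt P₁ P₂ l x * logRatio P₁ P₂ x

lemma rpow_one_sub_mul_rpow_eq_mul_exp {a b : ℝ} (ha : 0 < a) (hb : 0 < b) (l : ℝ) :
    a ^ (1 - l) * b ^ l = a * exp (l * -log (a / b)) := by
  rw [rpow_def_of_pos ha, rpow_def_of_pos hb, log_div ha.ne' hb.ne', ← exp_add]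
  calc exp _ = exp (log a) * exp (l * -(log a - log b)) := by rw [← exp_add]; ring_nf
    _ = _ := by rw [exp_log ha]

lemma rpow_one_sub_mul_rpow_eq_mul_exp' {a b : ℝ} (ha : 0 < a) (hb : 0 < b) (l : ℝ) :
    a ^ (1 - l) * b ^ l = b * exp ((1 - l) * log (a / b)) := by
  rw [rpow_def_of_pos ha, rpow_def_of_pos hb, log_div ha.ne' hb.ne', ← exp_add]
  calc exp _ = exp (log b) * exp ((1 - l) * (log a - log b)) := by rw [← exp_add]; ring_nf
    _ = _ := by rw [exp_log hb]

lemma tiltNormalizer_eq_sum_left (h₁ : ∀ x, 0 < P₁ x) (h₂ : ∀ x, 0 < P₂ x) (l : ℝ) :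
    tiltNormalizer P₁ P₂ l = ∑ x, P₁ x * exp (l * -logRatio P₁ P₂ x) :=
  Finset.sum_congr rfl fun x _ => rpow_one_sub_mul_rpow_eq_mul_exp (h₁ x) (h₂ x) l

lemma tiltNormalizer_eq_sum_right (h₁ : ∀ x, 0 < P₁ x) (h₂ : ∀ x, 0 < P₂ x) (l : ℝ) :
    tiltNormalizer P₁ P₂ l = ∑ x, P₂ x * exp ((1 - l) * logRatio P₁ P₂ x) :=
  Finset.sum_congr rfl fun x _ => rpow_one_sub_mul_rpow_eq_mul_exp' (h₁ x) (h₂ x) l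

lemma eq_of_logRatio_eq_const (h₁ : ∀ x, 0 < P₁ x) (h₂ : ∀ x, 0 < P₂ x)
    (hs₁ : ∑ x, P₁ x = 1) (hs₂ : ∑ x, P₂ x = 1) {c : ℝ} (hc : ∀ x, logRatio P₁ P₂ x = c) :
    P₁ = P₂ := by
  have hx (x : α) : P₁ x = exp c * P₂ x := by
    rw [← hc x, logRatio, exp_log (div_pos (h₁ x) (h₂ x)), div_mul_cancel₀ _ (h₂ x).ne']
  have hc1 : exp c = 1 := by
    simpa [hx, ← Finset.mul_sum, hs₂] using hs₁
  funext x
  rw [hx x, hc1, one_mul]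

variable [Nonempty α]

lemma tiltNormalizer_pos (h₁ : ∀ x, 0 < P₁ x) (h₂ : ∀ x, 0 < P₂ x) (l : ℝ) :
    0 < tiltNormalizer P₁ P₂ l :=
  Finset.sum_pos (fun x _ => by have := h₁ x; have := h₂ x; positivity) Finset.univ_nonempty

lemma tilt_pos (h₁ : ∀ x, 0 < P₁ x) (h₂ : ∀ x, 0 < P₂ x) (l : ℝ) (x : α) :
    0 < tilt P₁ P₂ l x :=
  div_pos (by have := h₁ x; have := h₂ x; positivity) (tiltNormalizer_pos h₁ h₂ l)

lemma sum_tilt (h₁ : ∀ x, 0 < P₁ x) (h₂ : ∀ x, 0 < P₂ x) (l : ℝ) : ∑ x, tilt P₁ P₂ l x = 1 := by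
  simp only [tilt, ← Finset.sum_div]
  exact div_self (tiltNormalizer_pos h₁ h₂ l).ne'

lemma log_tilt_div_left (h₁ : ∀ x, 0 < P₁ x) (h₂ : ∀ x, 0 < P₂ x) (l : ℝ) (x : α) :
    log (tilt P₁ P₂ l x / P₁ x) = l * -logRatio P₁ P₂ x - log (tiltNormalizer P₁ P₂ l) := by
  have : tilt P₁ P₂ l x / P₁ x = exp (l * -logRatio P₁ P₂ x) / tiltNormalizer P₁ P₂ l := by
    rw [tilt, rpow_one_sub_mul_rpow_eq_mul_exp (h₁ x) (h₂ x)]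
    field_simp [(h₁ x).ne']
    rfl
  rw [this, log_div (exp_pos _).ne' (tiltNormalizer_pos h₁ h₂ l).ne', log_exp]

lemma log_tilt_div_right (h₁ : ∀ x, 0 < P₁ x) (h₂ : ∀ x, 0 < P₂ x) (l : ℝ) (x : α) :
    log (tilt P₁ P₂ l x / P₂ x) = (1 - l) * logRatio P₁ P₂ x - log (tiltNormalizer P₁ P₂ l) := by
  have : tilt P₁ P₂ l x / P₂ x = exp ((1 - l) * logRatio P₁ P₂ x) / tiltNormalizer P₁ P₂ l := by
    rw [tilt, rpow_one_sub_mul_rpow_eq_mul_exp' (h₁ x) (h₂ x)]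
    field_simp [(h₂ x).ne']
    rfl
  rw [this, log_div (exp_pos _).ne' (tiltNormalizer_pos h₁ h₂ l).ne', log_exp]

lemma kl_tilt_left (h₁ : ∀ x, 0 < P₁ x) (h₂ : ∀ x, 0 < P₂ x) (l : ℝ) :
    kl (tilt P₁ P₂ l) P₁ = l * -tiltMean P₁ P₂ l - log (tiltNormalizer P₁ P₂ l) := by
  simp only [kl, log_tilt_div_left h₁ h₂, mul_sub, Finset.sum_sub_distrib, ← Finset.sum_mul,
    sum_tilt h₁ h₂, one_mul, tiltMean, Finset.mul_sum, ← Finset.sum_neg_distrib]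
  congr 1
  exact Finset.sum_congr rfl fun x _ => by ring

lemma kl_tilt_right (h₁ : ∀ x, 0 < P₁ x) (h₂ : ∀ x, 0 < P₂ x) (l : ℝ) :
    kl (tilt P₁ P₂ l) P₂ = (1 - l) * tiltMean P₁ P₂ l - log (tiltNormalizer P₁ P₂ l) := by
  simp only [kl, log_tilt_div_right h₁ h₂, mul_sub, Finset.sum_sub_distrib, ← Finset.sum_mul,
    sum_tilt h₁ h₂, one_mul, tiltMean, Finset.mul_sum]
  congr 1
  exact Finset.sum_congr rfl fun x _ => by ring

lemma tilt_ne_left (h₁ : ∀ x, 0 < P₁ x) (h₂ : ∀ x, 0 < P₂ x)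
    (hs₁ : ∑ x, P₁ x = 1) (hs₂ : ∑ x, P₂ x = 1) (hne : P₁ ≠ P₂) (hl : l ≠ 0) :
    tilt P₁ P₂ l ≠ P₁ := by
  intro h
  refine hne (eq_of_logRatio_eq_const h₁ h₂ hs₁ hs₂ (c := -log (tiltNormalizer P₁ P₂ l) / l)
    fun x => ?_)
  have := log_tilt_div_left h₁ h₂ l x
  rw [h, div_self (h₁ x).ne', log_one] at this
  field_simp
  linarith

lemma tilt_ne_right (h₁ : ∀ x, 0 < P₁ x) (h₂ : ∀ x, 0 < P₂ x)
    (hs₁ : ∑ x, P₁ x = 1) (hs₂ : ∑ x, P₂ x = 1) (hne : P₁ ≠ P₂) (hl : l ≠ 1) :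
    tilt P₁ P₂ l ≠ P₂ := by
  intro h
  refine hne (eq_of_logRatio_eq_const h₁ h₂ hs₁ hs₂ (c := log (tiltNormalizer P₁ P₂ l) / (1 - l))
    fun x => ?_)
  have := log_tilt_div_right h₁ h₂ l x
  rw [h, div_self (h₂ x).ne', log_one] at this
  field_simp [sub_ne_zero.2 hl.symm]
  linarith

end TiltedFamily

section Gibbs

open InformationTheory

variable {α : Type*} [Fintype α] {Q P : α → ℝ}

lemma mul_log_div_eq_mul_klFun {q p : ℝ} (hp : 0 < p) :
    q * log (q / p) = p * klFun (q / p) + (q - p) := by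
  rw [klFun_apply]
  field_simp
  ring

lemma kl_pos (hQ : ∀ x, 0 < Q x) (hP : ∀ x, 0 < P x) (hQs : ∑ x, Q x = 1)
    (hPs : ∑ x, P x = 1) (hne : Q ≠ P) : 0 < kl Q P := by
  have hkl : kl Q P = ∑ x, P x * klFun (Q x / P x) := by
    simp only [kl, mul_log_div_eq_mul_klFun (hP _), Finset.sum_add_distrib,
      Finset.sum_sub_distrib, hQs, hPs, sub_self, add_zero]
  obtain ⟨x, hx⟩ := Function.ne_iff.1 hne
  have hnonneg (y : α) : 0 ≤ P y * klFun (Q y / P y) :=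
    mul_nonneg (hP y).le (klFun_nonneg (div_pos (hQ y) (hP y)).le)
  rw [hkl]
  refine Finset.sum_pos' (fun y _ => hnonneg y) ⟨x, Finset.mem_univ _, ?_⟩
  refine (hnonneg x).lt_of_ne (Ne.symm (mul_ne_zero (hP x).ne' ?_))
  rw [Ne, klFun_eq_zero_iff (div_pos (hQ x) (hP x)).le, div_eq_one_iff_eq (hP x).ne']
  exact hx

end Gibbs

section ProductProbability

variable {α : Type*} [Fintype α] {P : α → ℝ} {N : ℕ}

lemma prodProb_empty (P : α → ℝ) : prodProb P (∅ : Set (Fin N → α)) = 0 := by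
  simp [prodProb]

lemma prodProb_mono (hP : ∀ x, 0 ≤ P x) {S T : Set (Fin N → α)} (hST : S ⊆ T) :
    prodProb P S ≤ prodProb P T :=
  Finset.sum_le_sum fun ω _ => Set.indicator_le_indicator_of_subset hST
    (fun _ => Finset.prod_nonneg fun _ _ => hP _) ω

lemma prodProb_union_le (hP : ∀ x, 0 ≤ P x) (S T : Set (Fin N → α)) :
    prodProb P (S ∪ T) ≤ prodProb P S + prodProb P T := by
  rw [prodProb, prodProb, prodProb, ← Finset.sum_add_distrib]
  refine Finset.sum_le_sum fun ω _ => ?_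
  rw [← Set.indicator_union_add_inter_apply]
  exact le_add_of_nonneg_right
    (Set.indicator_nonneg (fun _ _ => Finset.prod_nonneg fun _ _ => hP _) ω)

lemma prodProb_le_sum_mul (hP : ∀ x, 0 ≤ P x) {S : Set (Fin N → α)}
    {f : (Fin N → α) → ℝ} (hf : ∀ ω, 0 ≤ f ω) (hfS : ∀ ω ∈ S, 1 ≤ f ω) :
    prodProb P S ≤ ∑ ω, (∏ i, P (ω i)) * f ω := by
  refine Finset.sum_le_sum fun ω _ => ?_
  have hp : 0 ≤ ∏ i, P (ω i) := Finset.prod_nonneg fun i _ => hP _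
  by_cases hω : ω ∈ S
  · rw [Set.indicator_of_mem hω]
    exact le_mul_of_one_le_right hp (hfS ω hω)
  · rw [Set.indicator_of_notMem hω]
    exact mul_nonneg hp (hf ω)

lemma sum_prod_mul_exp_sum_eq_pow (hs : ∑ x, P x = 1) (I : Finset (Fin N)) (g : α → ℝ) :
    ∑ ω : Fin N → α, (∏ i, P (ω i)) * exp (∑ i ∈ I, g (ω i))
      = (∑ x, P x * exp (g x)) ^ I.card := by
  have hfactor (ω : Fin N → α) : (∏ i, P (ω i)) * exp (∑ i ∈ I, g (ω i))
      = ∏ i, P (ω i) * (if i ∈ I then exp (g (ω i)) else 1) := by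
    rw [Finset.prod_mul_distrib, Finset.prod_ite_mem, Finset.univ_inter, exp_sum]
  have hcoord (i : Fin N) : ∑ x, P x * (if i ∈ I then exp (g x) else 1)
      = if i ∈ I then ∑ x, P x * exp (g x) else 1 := by
    split_ifs <;> simp [hs]
  rw [Finset.sum_congr rfl fun ω _ => hfactor ω,
    ← Fintype.prod_sum fun i x => P x * (if i ∈ I then exp (g x) else 1)]
  simp_rw [hcoord]
  rw [Finset.prod_ite_mem, Finset.univ_inter, Finset.prod_const]

lemma prodProb_le_exp_mul_mgf_pow (hP : ∀ x, 0 ≤ P x) (hs : ∑ x, P x = 1)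
    (I : Finset (Fin N)) (g : α → ℝ) {t : ℝ} (ht : 0 ≤ t) (c : ℝ) :
    prodProb P {ω : Fin N → α | c ≤ ∑ i ∈ I, g (ω i)}
      ≤ exp (-(t * c)) * (∑ x, P x * exp (t * g x)) ^ I.card := by
  calc prodProb P {ω : Fin N → α | c ≤ ∑ i ∈ I, g (ω i)}
      ≤ ∑ ω : Fin N → α, (∏ i, P (ω i)) * (exp (-(t * c)) * exp (∑ i ∈ I, t * g (ω i))) := by
        refine prodProb_le_sum_mul hP (fun ω => by positivity) fun ω hω => ?_
        rw [← exp_add, ← Finset.mul_sum]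
        have hc : c ≤ ∑ i ∈ I, g (ω i) := hω
        exact one_le_exp (by nlinarith)
    _ = exp (-(t * c)) * (∑ x, P x * exp (t * g x)) ^ I.card := by
        rw [← sum_prod_mul_exp_sum_eq_pow hs I fun x => t * g x, Finset.mul_sum]
        exact Finset.sum_congr rfl fun ω _ => by ring

end ProductProbability

section Tails

variable {α : Type*} [Fintype α] [Nonempty α] {P₁ P₂ : α → ℝ} {l : ℝ} {N : ℕ}

lemma prodProb_tiltMean_le_mean_logRatio (h₁ : ∀ x, 0 < P₁ x) (h₂ : ∀ x, 0 < P₂ x)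
    (hs₂ : ∑ x, P₂ x = 1) (hl : l ≤ 1) (I : Finset (Fin N)) {m : ℝ}
    (hI : (I.card : ℝ) = m) (hm : 0 < m) :
    prodProb P₂ {ω : Fin N → α | tiltMean P₁ P₂ l ≤ (∑ i ∈ I, logRatio P₁ P₂ (ω i)) / m}
      ≤ exp (-(m * kl (tilt P₁ P₂ l) P₂)) := by
  have hset : {ω : Fin N → α | tiltMean P₁ P₂ l ≤ (∑ i ∈ I, logRatio P₁ P₂ (ω i)) / m}
      = {ω | tiltMean P₁ P₂ l * m ≤ ∑ i ∈ I, logRatio P₁ P₂ (ω i)} := by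
    ext ω
    exact le_div_iff₀ hm
  rw [hset]
  refine (prodProb_le_exp_mul_mgf_pow (fun x => (h₂ x).le) hs₂ I _ (sub_nonneg.2 hl) _).trans_eq
    ?_
  rw [← tiltNormalizer_eq_sum_right h₁ h₂, ← exp_log (tiltNormalizer_pos h₁ h₂ l),
    ← exp_nat_mul, hI, ← exp_add, kl_tilt_right h₁ h₂]
  ring_nf

lemma prodProb_mean_logRatio_le_tiltMean (h₁ : ∀ x, 0 < P₁ x) (h₂ : ∀ x, 0 < P₂ x)
    (hs₁ : ∑ x, P₁ x = 1) (hl : 0 ≤ l) (I : Finset (Fin N)) {m : ℝ}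
    (hI : (I.card : ℝ) = m) (hm : 0 < m) :
    prodProb P₁ {ω : Fin N → α | (∑ i ∈ I, logRatio P₁ P₂ (ω i)) / m ≤ tiltMean P₁ P₂ l}
      ≤ exp (-(m * kl (tilt P₁ P₂ l) P₁)) := by
  have hset : {ω : Fin N → α | (∑ i ∈ I, logRatio P₁ P₂ (ω i)) / m ≤ tiltMean P₁ P₂ l}
      = {ω | -(tiltMean P₁ P₂ l * m) ≤ ∑ i ∈ I, -logRatio P₁ P₂ (ω i)} := by
    ext ω
    change _ / m ≤ tiltMean P₁ P₂ l ↔ -(tiltMean P₁ P₂ l * m) ≤ _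
    rw [div_le_iff₀ hm, Finset.sum_neg_distrib, neg_le_neg_iff]
  rw [hset]
  refine (prodProb_le_exp_mul_mgf_pow (fun x => (h₁ x).le) hs₁ I (fun x => -logRatio P₁ P₂ x) hl
    _).trans_eq ?_
  rw [← tiltNormalizer_eq_sum_left h₁ h₂, ← exp_log (tiltNormalizer_pos h₁ h₂ l),
    ← exp_nat_mul, hI, ← exp_add, kl_tilt_left h₁ h₂]
  ring_nf

end Tails

section Tests

variable {α : Type*} {P₁ P₂ : α → ℝ} {N : ℕ}

lemma card_filter_val_lt_of_le {n : ℕ} (h : n ≤ N) : #{i : Fin N | (i : ℕ) < n} = n := by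
  rw [Fin.card_filter_val_lt, min_eq_right h]

lemma card_filter_le_val (N n : ℕ) : #{i : Fin N | n ≤ (i : ℕ)} = N - n := by
  have := Finset.card_filter_add_card_filter_not (s := univ) fun i : Fin N => (i : ℕ) < n
  simp only [not_lt, Fin.card_filter_val_lt, card_univ, Fintype.card_fin] at this
  omega

lemma S1_congr {n : ℕ} {ω ω' : Fin N → α} (h : ∀ i : Fin N, (i : ℕ) < n → ω i = ω' i) :
    S1 P₁ P₂ n ω = S1 P₁ P₂ n ω' :=
  Finset.sum_congr rfl fun i hi => by rw [h i (Finset.mem_filter.1 hi).2]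

noncomputable def fixedLengthTest (P₁ P₂ : α → ℝ) (n : ℕ) (θ : ℝ) : HypTest α n where
  τ _ := n
  A1 := {ω | θ ≤ S1 P₁ P₂ n ω / n}
  A2 := {ω | θ ≤ S1 P₁ P₂ n ω / n}ᶜ
  tau_le _ := le_rfl
  stopping _ _ _ := rfl
  adapted1 _ _ h := by rw [funext fun i => h i i.isLt]
  adapted2 _ _ h := by rw [funext fun i => h i i.isLt]
  disj := disjoint_compl_right
  exhaust := Set.union_compl_self _

section TwoPhase

variable {k n : ℕ} {a₁ b₁ a : ℝ}

lemma le_twoPhaseTau (ω : Fin ((k + 1) * n) → α) : n ≤ twoPhaseTau P₁ P₂ k n a₁ b₁ ω := by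
  unfold twoPhaseTau
  split_ifs
  exacts [Nat.le_mul_of_pos_left n k.succ_pos, le_rfl]

lemma twoPhaseTau_le (ω : Fin ((k + 1) * n) → α) : twoPhaseTau P₁ P₂ k n a₁ b₁ ω ≤ (k + 1) * n := by
  unfold twoPhaseTau
  split_ifs
  exacts [le_rfl, Nat.le_mul_of_pos_left n k.succ_pos]

lemma inconclusive_of_lt_twoPhaseTau {ω : Fin ((k + 1) * n) → α}
    (h : n < twoPhaseTau P₁ P₂ k n a₁ b₁ ω) : b₁ < S1 P₁ P₂ n ω / n ∧ S1 P₁ P₂ n ω / n < a₁ := by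
  unfold twoPhaseTau at h
  split_ifs at h with hmid
  exacts [hmid, absurd h (lt_irrefl n)]

lemma mem_twoPhaseA1_congr (ω ω' : Fin ((k + 1) * n) → α)
    (h : ∀ i : Fin ((k + 1) * n), (i : ℕ) < twoPhaseTau P₁ P₂ k n a₁ b₁ ω → ω i = ω' i) :
    ω ∈ twoPhaseA1 P₁ P₂ k n a₁ b₁ a ↔ ω' ∈ twoPhaseA1 P₁ P₂ k n a₁ b₁ a := by
  by_cases hmid : b₁ < S1 P₁ P₂ n ω / n ∧ S1 P₁ P₂ n ω / n < a₁
  · have hτ : twoPhaseTau P₁ P₂ k n a₁ b₁ ω = (k + 1) * n := if_pos hmid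
    rw [funext fun i => h i (by rw [hτ]; exact i.isLt)]
  · have hτ : twoPhaseTau P₁ P₂ k n a₁ b₁ ω = n := if_neg hmid
    have hS : S1 P₁ P₂ n ω = S1 P₁ P₂ n ω' := S1_congr fun i hi => h i (by rw [hτ]; exact hi)
    change _ ∨ _ ↔ _ ∨ _
    rw [← hS]
    exact or_congr_right ⟨fun h' => absurd ⟨h'.1, h'.2.1⟩ hmid,
      fun h' => absurd ⟨h'.1, h'.2.1⟩ hmid⟩

-- `twoPhaseA2` is disjoint from `twoPhaseA1` only when `b₁ < a₁`, which the thresholds used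
-- below need not satisfy; the complement of `twoPhaseA1` is the decision for `H₂` instead.
noncomputable def twoPhaseTest (P₁ P₂ : α → ℝ) (k n : ℕ) (a₁ b₁ a : ℝ) :
    HypTest α ((k + 1) * n) where
  τ := twoPhaseTau P₁ P₂ k n a₁ b₁
  A1 := twoPhaseA1 P₁ P₂ k n a₁ b₁ a
  A2 := (twoPhaseA1 P₁ P₂ k n a₁ b₁ a)ᶜ
  tau_le := twoPhaseTau_le
  stopping ω ω' h := by
    rw [twoPhaseTau, twoPhaseTau, S1_congr fun i hi => h i (hi.trans_le (le_twoPhaseTau ω))]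
  adapted1 := mem_twoPhaseA1_congr
  adapted2 ω ω' h := not_congr (mem_twoPhaseA1_congr ω ω' h)
  disj := disjoint_compl_right
  exhaust := Set.union_compl_self _

end TwoPhase

end Tests

section TestErrors

variable {α : Type*} [Fintype α] {P₁ P₂ : α → ℝ} {l la lb : ℝ} {k n : ℕ} {a₁ b₁ θ : ℝ}

lemma prodProb_fixedLengthTest_tau_gt (P : α → ℝ) :
    prodProb P {ω | n < (fixedLengthTest P₁ P₂ n θ).τ ω} = 0 := by
  simp [fixedLengthTest, prodProb]

variable [Nonempty α]

lemma prodProb_fixedLengthTest_A2_le (h₁ : ∀ x, 0 < P₁ x) (h₂ : ∀ x, 0 < P₂ x)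
    (hs₁ : ∑ x, P₁ x = 1) (hl : 0 ≤ l) (hn : 0 < n) :
    prodProb P₁ (fixedLengthTest P₁ P₂ n (tiltMean P₁ P₂ l)).A2
      ≤ exp (-(n * kl (tilt P₁ P₂ l) P₁)) :=
  calc prodProb P₁ (fixedLengthTest P₁ P₂ n (tiltMean P₁ P₂ l)).A2
      ≤ prodProb P₁ {ω : Fin n → α | S1 P₁ P₂ n ω / n ≤ tiltMean P₁ P₂ l} :=
        prodProb_mono (fun x => (h₁ x).le) fun ω hω =>
          (not_le.1 (show ¬tiltMean P₁ P₂ l ≤ S1 P₁ P₂ n ω / n from hω)).le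
    _ ≤ _ := prodProb_mean_logRatio_le_tiltMean h₁ h₂ hs₁ hl _
        (by rw [card_filter_val_lt_of_le le_rfl]) (Nat.cast_pos.2 hn)

lemma prodProb_fixedLengthTest_A1_le (h₁ : ∀ x, 0 < P₁ x) (h₂ : ∀ x, 0 < P₂ x)
    (hs₂ : ∑ x, P₂ x = 1) (hl : l ≤ 1) (hn : 0 < n) :
    prodProb P₂ (fixedLengthTest P₁ P₂ n (tiltMean P₁ P₂ l)).A1
      ≤ exp (-(n * kl (tilt P₁ P₂ l) P₂)) :=
  prodProb_tiltMean_le_mean_logRatio h₁ h₂ hs₂ hl _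
    (by rw [card_filter_val_lt_of_le le_rfl]) (Nat.cast_pos.2 hn)

lemma prodProb_twoPhaseTest_tau_gt_left (h₁ : ∀ x, 0 < P₁ x) (h₂ : ∀ x, 0 < P₂ x)
    (hs₁ : ∑ x, P₁ x = 1) (hlb : 0 ≤ lb) (hn : 0 < n) :
    prodProb P₁ {ω | n < (twoPhaseTest P₁ P₂ k n (tiltMean P₁ P₂ lb) b₁ θ).τ ω}
      ≤ exp (-(n * kl (tilt P₁ P₂ lb) P₁)) :=
  calc prodProb P₁ {ω | n < (twoPhaseTest P₁ P₂ k n (tiltMean P₁ P₂ lb) b₁ θ).τ ω}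
      ≤ prodProb P₁ {ω : Fin ((k + 1) * n) → α | S1 P₁ P₂ n ω / n ≤ tiltMean P₁ P₂ lb} :=
        prodProb_mono (fun x => (h₁ x).le) fun _ hω => (inconclusive_of_lt_twoPhaseTau hω).2.le
    _ ≤ _ := prodProb_mean_logRatio_le_tiltMean h₁ h₂ hs₁ hlb _
        (by rw [card_filter_val_lt_of_le (Nat.le_mul_of_pos_left n k.succ_pos)])
        (Nat.cast_pos.2 hn)

lemma prodProb_twoPhaseTest_tau_gt_right (h₁ : ∀ x, 0 < P₁ x) (h₂ : ∀ x, 0 < P₂ x)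
    (hs₂ : ∑ x, P₂ x = 1) (hla : la ≤ 1) (hn : 0 < n) :
    prodProb P₂ {ω | n < (twoPhaseTest P₁ P₂ k n a₁ (tiltMean P₁ P₂ la) θ).τ ω}
      ≤ exp (-(n * kl (tilt P₁ P₂ la) P₂)) :=
  calc prodProb P₂ {ω | n < (twoPhaseTest P₁ P₂ k n a₁ (tiltMean P₁ P₂ la) θ).τ ω}
      ≤ prodProb P₂ {ω : Fin ((k + 1) * n) → α | tiltMean P₁ P₂ la ≤ S1 P₁ P₂ n ω / n} :=
        prodProb_mono (fun x => (h₂ x).le) fun _ hω => (inconclusive_of_lt_twoPhaseTau hω).1.le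
    _ ≤ _ := prodProb_tiltMean_le_mean_logRatio h₁ h₂ hs₂ hla _
        (by rw [card_filter_val_lt_of_le (Nat.le_mul_of_pos_left n k.succ_pos)])
        (Nat.cast_pos.2 hn)

lemma cast_card_filter_le_val_mul :
    ((#{i : Fin ((k + 1) * n) | n ≤ (i : ℕ)} : ℕ) : ℝ) = k * n := by
  rw [card_filter_le_val, add_one_mul, Nat.add_sub_cancel, Nat.cast_mul]

lemma prodProb_twoPhaseTest_A2_le (h₁ : ∀ x, 0 < P₁ x) (h₂ : ∀ x, 0 < P₂ x)
    (hs₁ : ∑ x, P₁ x = 1) (hla : 0 ≤ la) (hl : 0 ≤ l) (hk : 0 < k) (hn : 0 < n) :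
    prodProb P₁ (twoPhaseTest P₁ P₂ k n a₁ (tiltMean P₁ P₂ la) (tiltMean P₁ P₂ l)).A2
      ≤ exp (-(n * kl (tilt P₁ P₂ la) P₁)) + exp (-(k * n * kl (tilt P₁ P₂ l) P₁)) := by
  have hsub : (twoPhaseTest P₁ P₂ k n a₁ (tiltMean P₁ P₂ la) (tiltMean P₁ P₂ l)).A2
      ⊆ {ω | S1 P₁ P₂ n ω / n ≤ tiltMean P₁ P₂ la}
        ∪ {ω | S2 P₁ P₂ n ω / (k * n) ≤ tiltMean P₁ P₂ l} := by
    intro ω hω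
    have hω' : ¬(_ ∨ _) := hω
    push Not at hω'
    by_cases hS1 : S1 P₁ P₂ n ω / n ≤ tiltMean P₁ P₂ la
    · exact Or.inl hS1
    · exact Or.inr (hω'.2 (not_le.1 hS1) hω'.1).le
  calc _ ≤ _ := prodProb_mono (fun x => (h₁ x).le) hsub
    _ ≤ _ := prodProb_union_le (fun x => (h₁ x).le) _ _
    _ ≤ _ := add_le_add
        (prodProb_mean_logRatio_le_tiltMean h₁ h₂ hs₁ hla _
          (by rw [card_filter_val_lt_of_le (Nat.le_mul_of_pos_left n k.succ_pos)])
          (Nat.cast_pos.2 hn))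
        (prodProb_mean_logRatio_le_tiltMean h₁ h₂ hs₁ hl _ cast_card_filter_le_val_mul
          (by positivity))

lemma prodProb_twoPhaseTest_A1_le (h₁ : ∀ x, 0 < P₁ x) (h₂ : ∀ x, 0 < P₂ x)
    (hs₂ : ∑ x, P₂ x = 1) (hlb : lb ≤ 1) (hl : l ≤ 1) (hk : 0 < k) (hn : 0 < n) :
    prodProb P₂ (twoPhaseTest P₁ P₂ k n (tiltMean P₁ P₂ lb) b₁ (tiltMean P₁ P₂ l)).A1
      ≤ exp (-(n * kl (tilt P₁ P₂ lb) P₂)) + exp (-(k * n * kl (tilt P₁ P₂ l) P₂)) := by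
  have hsub : (twoPhaseTest P₁ P₂ k n (tiltMean P₁ P₂ lb) b₁ (tiltMean P₁ P₂ l)).A1
      ⊆ {ω | tiltMean P₁ P₂ lb ≤ S1 P₁ P₂ n ω / n}
        ∪ {ω | tiltMean P₁ P₂ l ≤ S2 P₁ P₂ n ω / (k * n)} := by
    rintro ω (h | ⟨-, -, h⟩)
    exacts [Or.inl h, Or.inr h]
  calc _ ≤ _ := prodProb_mono (fun x => (h₂ x).le) hsub
    _ ≤ _ := prodProb_union_le (fun x => (h₂ x).le) _ _
    _ ≤ _ := add_le_add
        (prodProb_tiltMean_le_mean_logRatio h₁ h₂ hs₂ hlb _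
          (by rw [card_filter_val_lt_of_le (Nat.le_mul_of_pos_left n k.succ_pos)])
          (Nat.cast_pos.2 hn))
        (prodProb_tiltMean_le_mean_logRatio h₁ h₂ hs₂ hl _ cast_card_filter_le_val_mul
          (by positivity))

end TestErrors

section Achievability

variable {α : Type*} [Fintype α] {P₁ P₂ : α → ℝ} {γ E₁ E₂ : ℝ}

def stopAtZero (A : Set (Fin 0 → α)) : HypTest α 0 where
  τ _ := 0
  A1 := A
  A2 := Aᶜ
  tau_le _ := le_rfl
  stopping _ _ _ := rfl
  adapted1 ω ω' _ := by rw [Subsingleton.elim ω ω']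
  adapted2 ω ω' _ := by rw [Subsingleton.elim ω ω']
  disj := disjoint_compl_right
  exhaust := Set.union_compl_self A

lemma prodProb_fin_zero_le_one (P : α → ℝ) (S : Set (Fin 0 → α)) : prodProb P S ≤ 1 := by
  simp only [prodProb, Finset.univ_unique, Finset.sum_singleton]
  by_cases h : default ∈ S <;> simp [h]

lemma aflAchievable_zero_left (hE₂ : 0 ≤ E₂) : AFLAchievable P₁ P₂ γ 0 E₂ := by
  refine ⟨le_rfl, hE₂, 1, one_pos, 1, one_pos, fun δ hδ => ⟨0, fun n _ => ⟨0, by simp,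
    stopAtZero ∅, ?_, ?_, ?_, ?_⟩⟩⟩
  · simp [stopAtZero, prodProb_empty, exp_nonneg]
  · simp [stopAtZero, prodProb_empty, exp_nonneg]
  · exact (prodProb_fin_zero_le_one _ _).trans (one_le_exp (by simp; positivity))
  · simp [stopAtZero, prodProb_empty, exp_nonneg]

lemma aflAchievable_zero_right (hE₁ : 0 ≤ E₁) : AFLAchievable P₁ P₂ γ E₁ 0 := by
  refine ⟨hE₁, le_rfl, 1, one_pos, 1, one_pos, fun δ hδ => ⟨0, fun n _ => ⟨0, by simp,
    stopAtZero Set.univ, ?_, ?_, ?_, ?_⟩⟩⟩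
  · simp [stopAtZero, prodProb_empty, exp_nonneg]
  · simp [stopAtZero, prodProb_empty, exp_nonneg]
  · simp [stopAtZero, prodProb_empty, exp_nonneg]
  · exact (prodProb_fin_zero_le_one _ _).trans (one_le_exp (by simp; positivity))

lemma exp_neg_add_exp_neg_le {x y z : ℝ} (hx : z + log 2 ≤ x) (hy : z + log 2 ≤ y) :
    exp (-x) + exp (-y) ≤ exp (-z) :=
  calc exp (-x) + exp (-y) ≤ exp (-(z + log 2)) + exp (-(z + log 2)) := by
        gcongr
    _ = exp (-z) := by rw [neg_add, exp_add, exp_neg (log 2), exp_log two_pos]; ring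

lemma exp_neg_mul_le_exp_neg_mul {D E δ : ℝ} {n : ℕ} (h : E - δ ≤ D) :
    exp (-(n * D)) ≤ exp (-((E - δ) * n)) := by
  rw [mul_comm]
  gcongr

variable [Nonempty α]

lemma aflAchievable_of_fixedLength (h₁ : ∀ x, 0 < P₁ x) (h₂ : ∀ x, 0 < P₂ x)
    (hs₁ : ∑ x, P₁ x = 1) (hs₂ : ∑ x, P₂ x = 1) {l : ℝ} (hl : l ∈ Set.Icc (0 : ℝ) 1)
    (hE₁ : 0 ≤ E₁) (hE₂ : 0 ≤ E₂) (hE₁l : E₁ ≤ kl (tilt P₁ P₂ l) P₁)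
    (hE₂l : E₂ ≤ kl (tilt P₁ P₂ l) P₂) : AFLAchievable P₁ P₂ γ E₁ E₂ := by
  refine ⟨hE₁, hE₂, 1, one_pos, 1, one_pos, fun δ hδ => ⟨1, fun n hn => ⟨n, by simp,
    fixedLengthTest P₁ P₂ n (tiltMean P₁ P₂ l), ?_, ?_, ?_, ?_⟩⟩⟩
  · rw [prodProb_fixedLengthTest_tau_gt]; positivity
  · rw [prodProb_fixedLengthTest_tau_gt]; positivity
  · exact (prodProb_fixedLengthTest_A2_le h₁ h₂ hs₁ hl.1 hn).trans
      (exp_neg_mul_le_exp_neg_mul (by linarith))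
  · exact (prodProb_fixedLengthTest_A1_le h₁ h₂ hs₂ hl.2 hn).trans
      (exp_neg_mul_le_exp_neg_mul (by linarith))

lemma aflAchievable_of_twoPhase (h₁ : ∀ x, 0 < P₁ x) (h₂ : ∀ x, 0 < P₂ x)
    (hs₁ : ∑ x, P₁ x = 1) (hs₂ : ∑ x, P₂ x = 1) (hne : P₁ ≠ P₂) (hE₁ : 0 ≤ E₁) (hE₂ : 0 ≤ E₂)
    (htilt : ∀ δ > 0, ∃ la ∈ Set.Icc (0 : ℝ) 1, ∃ lb ∈ Set.Icc (0 : ℝ) 1,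
      γ ≤ kl (tilt P₁ P₂ la) P₂ ∧ E₁ - δ < kl (tilt P₁ P₂ la) P₁ ∧
      γ ≤ kl (tilt P₁ P₂ lb) P₁ ∧ E₂ - δ < kl (tilt P₁ P₂ lb) P₂) :
    AFLAchievable P₁ P₂ γ E₁ E₂ := by
  set D₁ := kl (tilt P₁ P₂ (1 / 2)) P₁
  set D₂ := kl (tilt P₁ P₂ (1 / 2)) P₂
  have hD₁ : 0 < D₁ := kl_pos (tilt_pos h₁ h₂ _) h₁ (sum_tilt h₁ h₂ _) hs₁
    (tilt_ne_left h₁ h₂ hs₁ hs₂ hne (by norm_num))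
  have hD₂ : 0 < D₂ := kl_pos (tilt_pos h₁ h₂ _) h₂ (sum_tilt h₁ h₂ _) hs₂
    (tilt_ne_right h₁ h₂ hs₁ hs₂ hne (by norm_num))
  obtain ⟨k, hk⟩ := exists_nat_gt (max (E₁ / D₁) (E₂ / D₂))
  have hkD₁ : E₁ ≤ k * D₁ := (div_le_iff₀ hD₁).1 ((le_max_left _ _).trans hk.le)
  have hkD₂ : E₂ ≤ k * D₂ := (div_le_iff₀ hD₂).1 ((le_max_right _ _).trans hk.le)
  have hk₀ : 0 < k := Nat.cast_pos.1 (((div_nonneg hE₁ hD₁.le).trans (le_max_left _ _)).trans_lt hk)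
  refine ⟨hE₁, hE₂, k + 1, by positivity, 1, one_pos, fun δ hδ => ?_⟩
  obtain ⟨la, hla, lb, hlb, hγa, hEa, hγb, hEb⟩ := htilt (δ / 2) (half_pos hδ)
  obtain ⟨n₀, hn₀⟩ := eventually_atTop.1 ((eventually_gt_atTop 0).and
    (tendsto_natCast_atTop_atTop.eventually_ge_atTop (log 2 / (δ / 2))))
  refine ⟨n₀, fun n hn => ?_⟩
  obtain ⟨hn, hlog⟩ := hn₀ n hn
  rw [div_le_iff₀ (half_pos hδ)] at hlog
  have hn' : (0 : ℝ) ≤ n := n.cast_nonneg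
  refine ⟨(k + 1) * n, by push_cast; ring_nf; rfl,
    twoPhaseTest P₁ P₂ k n (tiltMean P₁ P₂ lb) (tiltMean P₁ P₂ la) (tiltMean P₁ P₂ (1 / 2)),
    ?_, ?_, ?_, ?_⟩
  · exact (prodProb_twoPhaseTest_tau_gt_left h₁ h₂ hs₁ hlb.1 hn).trans
      (exp_le_exp.2 (by nlinarith))
  · exact (prodProb_twoPhaseTest_tau_gt_right h₁ h₂ hs₂ hla.2 hn).trans
      (exp_le_exp.2 (by nlinarith))
  · exact (prodProb_twoPhaseTest_A2_le h₁ h₂ hs₁ hla.1 (by norm_num) hk₀ hn).trans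
      (exp_neg_add_exp_neg_le (by nlinarith) (by nlinarith))
  · exact (prodProb_twoPhaseTest_A1_le h₁ h₂ hs₂ hlb.2 (by norm_num) hk₀ hn).trans
      (exp_neg_add_exp_neg_le (by nlinarith) (by nlinarith))

end Achievability

lemma exists_lt_of_lt_sSup_of_pos {s : Set ℝ} {b : ℝ} (hs : 0 < sSup s) (hb : b < sSup s) :
    ∃ a ∈ s, b < a := by
  refine exists_lt_of_lt_csSup (Set.nonempty_iff_ne_empty.2 fun h => ?_) hb
  rw [h, Real.sSup_empty] at hs
  exact lt_irrefl 0 hs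

theorem afl_achievability_general (P₁ P₂ : 𝒳 → ℝ)
    (h1pos : ∀ x, 0 < P₁ x) (h2pos : ∀ x, 0 < P₂ x)
    (h1sum : ∑ x, P₁ x = 1) (h2sum : ∑ x, P₂ x = 1)
    (hne : P₁ ≠ P₂)
    (γ : ℝ) (E₁ E₂ : ℝ)
    (hE : (E₁, E₂) ∈ RFD P₁ P₂ ∪
      (Set.Icc 0 (E1exp P₁ P₂ γ) ×ˢ Set.Icc 0 (E2exp P₁ P₂ γ))) :
    AFLAchievable P₁ P₂ γ E₁ E₂ := by
  rcases hE with ⟨hE₁, hE₂, l, hl, hE₁l, hE₂l⟩ | ⟨⟨hE₁, hE₁γ⟩, hE₂, hE₂γ⟩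
  · exact aflAchievable_of_fixedLength h1pos h2pos h1sum h2sum hl hE₁ hE₂ hE₁l hE₂l
  rcases hE₁.eq_or_lt with rfl | hE₁
  · exact aflAchievable_zero_left hE₂
  rcases hE₂.eq_or_lt with rfl | hE₂
  · exact aflAchievable_zero_right hE₁.le
  refine aflAchievable_of_twoPhase h1pos h2pos h1sum h2sum hne hE₁.le hE₂.le fun δ hδ => ?_
  obtain ⟨_, ⟨la, hla, hγa, rfl⟩, hEa⟩ :=
    exists_lt_of_lt_sSup_of_pos (hE₁.trans_le hE₁γ) (show E₁ - δ < E1exp P₁ P₂ γ by linarith)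
  obtain ⟨_, ⟨lb, hlb, hγb, rfl⟩, hEb⟩ :=
    exists_lt_of_lt_sSup_of_pos (hE₂.trans_le hE₂γ) (show E₂ - δ < E2exp P₁ P₂ γ by linarith)
  exact ⟨la, hla, lb, hlb, hγa, hEa, hγb, hEb⟩

/-- Achievability part of Theorem 1: every pair in
`R_FD ∪ ([0,E₁(γ)] × [0,E₂(γ)])` is achievable by γ-almost-fixed-length tests. -/
theorem afl_achievability (P₁ P₂ : 𝒳 → ℝ)
    (h1pos : ∀ x, 0 < P₁ x) (h2pos : ∀ x, 0 < P₂ x)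
    (h1sum : ∑ x, P₁ x = 1) (h2sum : ∑ x, P₂ x = 1)
    (hne : P₁ ≠ P₂)
    (γ : ℝ) (hγ : 0 < γ) (E₁ E₂ : ℝ)
    (hE : (E₁, E₂) ∈ RFD P₁ P₂ ∪
      (Set.Icc 0 (E1exp P₁ P₂ γ) ×ˢ Set.Icc 0 (E2exp P₁ P₂ γ))) :
    AFLAchievable P₁ P₂ γ E₁ E₂ :=
  afl_achievability_general P₁ P₂ h1pos h2pos h1sum h2sum hne γ E₁ E₂ hE
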